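/- Let Δ and A be linearly ordered sets and let Q : Δ × A → ℝ be subadditive in (δ,a). Suppose that for every δ ∈ Δ the function a ↦ Q(δ,a) attains its minimum over A and the set of minimizers argmin_{a∈A} Q(δ,a) has a least element a*(δ). Then the selection δ ↦ a*(δ) is monotone nondecreasing in δ, i.e., δ₁ ≤ δ₂ implies a*(δ₁) ≤ a*(δ₂). -/
import Mathlib

/-- `Q` is subadditive in `(δ, a)`: for all `δ⁻ ≤ δ⁺` and `a⁻ ≤ a⁺`,
`Q δ⁺ a⁺ + Q δ⁻ a⁻ ≤ Q δ⁺ a⁻ + Q δ⁻ a⁺`. -/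
def Subadditive2 {Δ A : Type*} [LinearOrder Δ] [LinearOrder A] (Q : Δ → A → ℝ) : Prop :=
  ∀ ⦃δm δp : Δ⦄ ⦃am ap : A⦄, δm ≤ δp → am ≤ ap →
    Q δp ap + Q δm am ≤ Q δp am + Q δm ap

/-- If `Q` is subadditive in `(δ, a)`, and for every `δ` the map `a ↦ Q δ a` attains its
minimum, with `astar δ` the least element of the set of minimizers, then `astar` is
monotone nondecreasing in `δ`. -/
theorem monotone_least_argmin_of_subadditive
    {Δ A : Type*} [LinearOrder Δ] [LinearOrder A]
    (Q : Δ → A → ℝ) (hQ : Subadditive2 Q) (astar : Δ → A)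
    (hmin : ∀ δ a, Q δ (astar δ) ≤ Q δ a)
    (hleast : ∀ δ a, (∀ a', Q δ a ≤ Q δ a') → astar δ ≤ a) :
    ∀ ⦃δ₁ δ₂ : Δ⦄, δ₁ ≤ δ₂ → astar δ₁ ≤ astar δ₂ := by
  intro δ₁ δ₂ h12
  by_contra h
  push_neg at h
  -- h : astar δ₂ < astar δ₁
  have hsub := hQ h12 h.le
  have h1 : Q δ₁ (astar δ₁) ≤ Q δ₁ (astar δ₂) := hmin δ₁ _
  have h2 : Q δ₂ (astar δ₂) ≤ Q δ₂ (astar δ₁) := hmin δ₂ _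
  -- hence Q δ₁ (astar δ₂) = Q δ₁ (astar δ₁), so astar δ₂ minimizes Q δ₁
  have key : Q δ₁ (astar δ₂) ≤ Q δ₁ (astar δ₁) := by linarith
  have : astar δ₁ ≤ astar δ₂ :=
    hleast δ₁ _ (fun a' => key.trans (hmin δ₁ a'))
  exact absurd this (not_le.mpr h)
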